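/- arXiv:0912.3104 — 5 statements merged into one kernel-verified Lean document; each statement's English description precedes it below -/
import Mathlib

section
/- Let n ≥ 4 and let s be a function assigning a rational number s_I to each 4-element subset I of {1,…,n}. Suppose that for every partition of {1,…,n} into four pairwise disjoint nonempty subsets A, B, C, D one has ∑_{I : |I∩A|=|I∩B|=|I∩C|=|I∩D|=1} s_I ≥ 0, where the sum ranges over 4-element subsets I of {1,…,n}. Then for every subset J ⊆ {1,…,n} with 2 ≤ |J| ≤ n−2, one has ∑_{I : |I∩J|=2} s_I ≥ 0, where again the sum ranges over 4-element subsets I of {1,…,n}. -/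
/-!
Average the F-nef inequalities over all F-curves whose tail partition refines `{J, Jᶜ}`,
i.e. over all `(A, J \ A, C, Jᶜ \ C)` with `A ⊆ J` and `C ⊆ Jᶜ` (a choice with an empty part
contributes an empty sum). A 4-set `I` is counted by such a partition exactly when `A` splits
`I ∩ J` and `C` splits `I ∩ Jᶜ` into two singletons, which forces `|I ∩ J| = 2`; and then it is
counted `2 ^ (|J| - 1) * 2 ^ (|Jᶜ| - 1)` times, independently of `I`. So the sum of these
nonnegative numbers is a positive multiple of `∑_{|I ∩ J| = 2} s_I`.
-/

open Finset

namespace Finset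

variable {α : Type*} [DecidableEq α]

lemma filter_powerset_inter_eq {T U J : Finset α} (hUT : U ⊆ T) (hTJ : T ⊆ J) :
    {A ∈ J.powerset | A ∩ T = U} = Icc U (U ∪ (J \ T)) := by
  ext A
  simp only [mem_filter, mem_powerset, mem_Icc, subset_iff, Finset.ext_iff, mem_inter,
    mem_union, mem_sdiff] at hUT hTJ ⊢
  grind

lemma card_filter_powerset_inter_eq {T U J : Finset α} (hUT : U ⊆ T) (hTJ : T ⊆ J) :
    #{A ∈ J.powerset | A ∩ T = U} = 2 ^ (#J - #T) := by
  have hdisj : Disjoint U (J \ T) := disjoint_sdiff.mono_left hUT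
  rw [filter_powerset_inter_eq hUT hTJ, card_Icc_finset subset_union_left,
    card_union_of_disjoint hdisj, card_sdiff_of_subset hTJ, Nat.add_sub_cancel_left]

lemma card_filter_powerset_card_inter_eq {T J : Finset α} (hTJ : T ⊆ J) (k : ℕ) :
    #{A ∈ J.powerset | #(A ∩ T) = k} = (#T).choose k * 2 ^ (#J - #T) := by
  rw [card_eq_sum_card_fiberwise (f := (· ∩ T)) (t := T.powersetCard k)]
  · rw [← card_powersetCard, ← smul_eq_mul, ← sum_const]
    refine sum_congr rfl fun U hU => ?_
    obtain ⟨hUT, hUk⟩ := mem_powersetCard.mp hU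
    rw [filter_filter, ← card_filter_powerset_inter_eq hUT hTJ]
    exact congr_arg card (filter_congr fun A _ => ⟨And.right, fun h => ⟨h ▸ hUk, h⟩⟩)
  · intro A hA
    exact mem_powersetCard.mpr ⟨inter_subset_right, (mem_filter.mp hA).2⟩

lemma card_inter_eq_one_and_card_inter_sdiff_eq_one_iff {I J A : Finset α} (hAJ : A ⊆ J) :
    #(I ∩ A) = 1 ∧ #(I ∩ (J \ A)) = 1 ↔ #(I ∩ J) = 2 ∧ #(A ∩ (I ∩ J)) = 1 := by
  have hA : I ∩ A = A ∩ (I ∩ J) := by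
    rw [inter_comm A, inter_assoc, inter_eq_right.mpr hAJ]
  have hsplit : #(A ∩ (I ∩ J)) + #(I ∩ (J \ A)) = #(I ∩ J) := by
    rw [← card_inter_add_card_sdiff (I ∩ J) A, inter_comm A, inter_sdiff_assoc]
  rw [hA]
  omega

lemma card_filter_powerset_splits (I J : Finset α) :
    #{A ∈ J.powerset | #(I ∩ A) = 1 ∧ #(I ∩ (J \ A)) = 1} =
      if #(I ∩ J) = 2 then 2 ^ (#J - 1) else 0 := by
  rw [filter_congr fun A hA =>
    card_inter_eq_one_and_card_inter_sdiff_eq_one_iff (I := I) (mem_powerset.mp hA)]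
  split_ifs with h
  · have hJ : 2 ≤ #J := h ▸ card_le_card inter_subset_right
    simp only [h, true_and]
    rw [card_filter_powerset_card_inter_eq inter_subset_right, h, Nat.choose_one_right,
      ← pow_succ']
    congr 1
    omega
  · simp [h]

lemma sum_sum_ite_and_and {β γ M : Type*} [AddCommMonoid M] (s : Finset β) (t : Finset γ)
    (P : Prop) [Decidable P] (p : β → Prop) [DecidablePred p] (q : γ → Prop)
    [DecidablePred q] (x : M) :
    ∑ a ∈ s, ∑ b ∈ t, (if P ∧ p a ∧ q b then x else 0) =
      if P then (#{a ∈ s | p a} * #{b ∈ t | q b}) • x else 0 := by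
  split_ifs with hP
  · simp only [hP, true_and, ite_and, mul_smul, ← sum_const, sum_filter]
    refine sum_congr rfl fun a _ => ?_
    split_ifs <;> simp
  · simp [hP]

end Finset

section FCurves

variable {α M : Type*} [Fintype α] [DecidableEq α] [AddCommMonoid M]

def fCurveSum (s : Finset α → M) (A B C D : Finset α) : M :=
  ∑ I ∈ univ.filter (fun I : Finset α =>
    #I = 4 ∧ #(I ∩ A) = 1 ∧ #(I ∩ B) = 1 ∧ #(I ∩ C) = 1 ∧ #(I ∩ D) = 1), s I

def boundarySum (s : Finset α → M) (J : Finset α) : M :=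
  ∑ I ∈ univ.filter (fun I : Finset α => #I = 4 ∧ #(I ∩ J) = 2), s I

def IsFNef [Preorder M] (s : Finset α → M) : Prop :=
  ∀ A B C D : Finset α, A.Nonempty → B.Nonempty → C.Nonempty → D.Nonempty →
    Disjoint A B → Disjoint A C → Disjoint A D → Disjoint B C → Disjoint B D → Disjoint C D →
    A ∪ B ∪ C ∪ D = univ → 0 ≤ fCurveSum s A B C D

lemma fCurveSum_nonneg_of_nonempty [Preorder M] (s : Finset α → M) {A B C D : Finset α}
    (h : A.Nonempty → B.Nonempty → C.Nonempty → D.Nonempty → 0 ≤ fCurveSum s A B C D) :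
    0 ≤ fCurveSum s A B C D := by
  by_cases hne : A.Nonempty ∧ B.Nonempty ∧ C.Nonempty ∧ D.Nonempty
  · exact h hne.1 hne.2.1 hne.2.2.1 hne.2.2.2
  · refine (sum_eq_zero fun I hI => absurd ?_ hne).ge
    have nonempty_of_card : ∀ X : Finset α, #(I ∩ X) = 1 → X.Nonempty := fun X hX =>
      (card_pos.mp (by omega : 0 < #(I ∩ X))).mono inter_subset_right
    obtain ⟨-, hA, hB, hC, hD⟩ := (mem_filter.mp hI).2
    exact ⟨nonempty_of_card _ hA, nonempty_of_card _ hB, nonempty_of_card _ hC,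
      nonempty_of_card _ hD⟩

lemma IsFNef.fCurveSum_splitting_nonneg [Preorder M] {s : Finset α → M} (hs : IsFNef s)
    {J A C : Finset α} (hAJ : A ⊆ J) (hCJ : C ⊆ Jᶜ) :
    0 ≤ fCurveSum s A (J \ A) C (Jᶜ \ C) := by
  have hJ : Disjoint J Jᶜ := disjoint_compl_right
  refine fCurveSum_nonneg_of_nonempty s fun hA hB hC hD => hs _ _ _ _ hA hB hC hD
    disjoint_sdiff (hJ.mono hAJ hCJ) (hJ.mono hAJ sdiff_subset) (hJ.mono sdiff_subset hCJ)
    (hJ.mono sdiff_subset sdiff_subset) disjoint_sdiff ?_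
  rw [union_sdiff_of_subset hAJ, union_assoc, union_sdiff_of_subset hCJ, union_compl]

lemma sum_sum_ite_splits (I J : Finset α) (x : M) :
    ∑ A ∈ J.powerset, ∑ C ∈ Jᶜ.powerset, (if #I = 4 ∧ #(I ∩ A) = 1 ∧ #(I ∩ (J \ A)) = 1 ∧
      #(I ∩ C) = 1 ∧ #(I ∩ (Jᶜ \ C)) = 1 then x else 0) =
      if #I = 4 ∧ #(I ∩ J) = 2 then (2 ^ (#J - 1) * 2 ^ (#Jᶜ - 1)) • x else 0 := by
  have h := sum_sum_ite_and_and J.powerset Jᶜ.powerset (#I = 4)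
    (fun A => #(I ∩ A) = 1 ∧ #(I ∩ (J \ A)) = 1)
    (fun C => #(I ∩ C) = 1 ∧ #(I ∩ (Jᶜ \ C)) = 1) x
  simp only [and_assoc] at h
  rw [h, card_filter_powerset_splits, card_filter_powerset_splits]
  have hcompl : #(I ∩ J) + #(I ∩ Jᶜ) = #I := by
    rw [← sdiff_eq_inter_compl, card_inter_add_card_sdiff]
  by_cases h4 : #I = 4
  · by_cases h2 : #(I ∩ J) = 2
    · simp [h4, h2, show #(I ∩ Jᶜ) = 2 by omega]
    · simp [h4, h2]
  · simp [h4]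

theorem sum_fCurveSum_splittings (s : Finset α → M) (J : Finset α) :
    ∑ A ∈ J.powerset, ∑ C ∈ Jᶜ.powerset, fCurveSum s A (J \ A) C (Jᶜ \ C) =
      (2 ^ (#J - 1) * 2 ^ (#Jᶜ - 1)) • boundarySum s J := by
  simp only [fCurveSum, boundarySum, sum_filter, smul_sum]
  rw [sum_congr rfl fun A _ => sum_comm, sum_comm]
  refine sum_congr rfl fun I _ => ?_
  rw [sum_sum_ite_splits, smul_ite, smul_zero]

end FCurves

theorem fulton_keel_subspace_general (n : ℕ) (s : Finset (Fin n) → ℚ)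
    (hF : ∀ A B C D : Finset (Fin n),
      A.Nonempty → B.Nonempty → C.Nonempty → D.Nonempty →
      Disjoint A B → Disjoint A C → Disjoint A D →
      Disjoint B C → Disjoint B D → Disjoint C D →
      A ∪ B ∪ C ∪ D = univ →
      0 ≤ ∑ I ∈ univ.filter (fun I : Finset (Fin n) =>
            I.card = 4 ∧ (I ∩ A).card = 1 ∧ (I ∩ B).card = 1 ∧
            (I ∩ C).card = 1 ∧ (I ∩ D).card = 1), s I)
    (J : Finset (Fin n)) :
    0 ≤ ∑ I ∈ univ.filter (fun I : Finset (Fin n) =>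
          I.card = 4 ∧ (I ∩ J).card = 2), s I := by
  have hs : IsFNef s := hF
  have hsum : 0 ≤ ∑ A ∈ J.powerset, ∑ C ∈ Jᶜ.powerset, fCurveSum s A (J \ A) C (Jᶜ \ C) :=
    sum_nonneg fun A hA => sum_nonneg fun C hC =>
      hs.fCurveSum_splitting_nonneg (mem_powerset.mp hA) (mem_powerset.mp hC)
  rw [sum_fCurveSum_splittings] at hsum
  exact nonneg_of_smul_nonneg_of_pos_left hsum (by positivity)

/-- Fulton's conjecture for the Keel subspace of `N^1(M̄_{0,n})`, combinatorial form:
if the Keel coordinate vector `s` is F-nef (all intersections with F-curves are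
nonnegative), then all boundary coefficients are nonnegative. -/
theorem fulton_keel_subspace (n : ℕ) (hn : 4 ≤ n) (s : Finset (Fin n) → ℚ)
    (hF : ∀ A B C D : Finset (Fin n),
      A.Nonempty → B.Nonempty → C.Nonempty → D.Nonempty →
      Disjoint A B → Disjoint A C → Disjoint A D →
      Disjoint B C → Disjoint B D → Disjoint C D →
      A ∪ B ∪ C ∪ D = univ →
      0 ≤ ∑ I ∈ univ.filter (fun I : Finset (Fin n) =>
            I.card = 4 ∧ (I ∩ A).card = 1 ∧ (I ∩ B).card = 1 ∧
            (I ∩ C).card = 1 ∧ (I ∩ D).card = 1), s I)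
    (J : Finset (Fin n)) (hJ2 : 2 ≤ J.card) (hJn : J.card ≤ n - 2) :
    0 ≤ ∑ I ∈ univ.filter (fun I : Finset (Fin n) =>
          I.card = 4 ∧ (I ∩ J).card = 2), s I :=
  fulton_keel_subspace_general n s hF J
end

section
/- Let n ≥ 6. Let N be the square matrix with rational entries whose rows and columns are both indexed by the 4-element subsets of {1,…,n}, with entry N(I, I′) = min{0, 2 − |(I ∖ {n}) ∩ I′|} for 4-element subsets I, I′ of {1,…,n}. Then det N = (−1)^{C(n−1,3)} · 2^{C(n−1,4)}, where C(m,k) denotes the binomial coefficient. In particular N is invertible. -/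
/-!
Write `z = n` and split the 4-subsets `I` according to whether `z ∈ I`. For `z ∈ I` the set
`I ∖ {z}` has three elements, so the entry in row `I` is `-1` when `I ∖ {z} ⊆ I'` and `0`
otherwise; in particular the block of rows and columns containing `z` is `-1`. Its Schur
complement `D + C B` has entry `min 0 (2 - c) + C(c, 3)` with `c = |I ∩ I'|`, the second term
counting the 3-subsets of `I ∩ I'`; this is `2` if `I = I'` and `0` otherwise. The two blocks
have `C(n-1, 3)` and `C(n-1, 4)` rows.
-/

open Finset

section

variable {α : Type*} [DecidableEq α]

theorem min_zero_two_sub_card_inter {S T : Finset α} (hS : #S = 3) :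
    min (0 : ℚ) (2 - #(S ∩ T)) = if S ⊆ T then -1 else 0 := by
  split_ifs with h
  · rw [inter_eq_left.mpr h, hS]
    norm_num
  · have hlt : #(S ∩ T) < #S :=
      card_lt_card (ssubset_of_subset_of_ne inter_subset_left (mt inter_eq_left.mp h))
    have hle : (#(S ∩ T) : ℚ) ≤ 2 := by exact_mod_cast (by omega : #(S ∩ T) ≤ 2)
    exact min_eq_left (by linarith)

theorem min_zero_two_sub_add_choose_three {c : ℕ} (hc : c ≤ 4) :
    min (0 : ℚ) (2 - c) + c.choose 3 = if c = 4 then 2 else 0 := by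
  interval_cases c <;> norm_num [Nat.choose]

end

abbrev FourSubset (α : Type*) := {I : Finset α // #I = 4}

namespace FourSubset

variable {α : Type*} [DecidableEq α]

omit [DecidableEq α] in
theorem subset_iff_eq {I I' : FourSubset α} : I.1 ⊆ I'.1 ↔ I = I' :=
  (subset_iff_eq_of_card_le (by rw [I.2, I'.2])).trans Subtype.ext_iff.symm

theorem card_inter_le_four (I I' : FourSubset α) : #(I.1 ∩ I'.1) ≤ 4 :=
  (card_le_card inter_subset_left).trans_eq I.2

theorem card_inter_eq_four_iff {I I' : FourSubset α} : #(I.1 ∩ I'.1) = 4 ↔ I = I' := by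
  rw [← subset_iff_eq, ← inter_eq_left, ← eq_iff_card_le_of_subset inter_subset_left, I.2]
  have := card_inter_le_four I I'
  omega

variable [Fintype α] {z : α}

theorem card_filter_erase_subset {S : Finset α} (hz : z ∉ S) :
    #{K : {K : FourSubset α // z ∈ K.1} | K.1.1.erase z ⊆ S} = (#S).choose 3 := by
  rw [← card_powersetCard]
  refine card_bij' (fun K _ => K.1.1.erase z)
    (fun J hJ => ⟨⟨insert z J, ?_⟩, mem_insert_self z J⟩) ?_ ?_ ?_ ?_
  · obtain ⟨hJS, hJ⟩ := mem_powersetCard.mp hJ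
    rw [card_insert_of_notMem (fun h => hz (hJS h)), hJ]
  · intro K hK
    rw [mem_filter] at hK
    exact mem_powersetCard.mpr ⟨hK.2, by rw [card_erase_of_mem K.2, K.1.2]⟩
  · intro J hJ
    obtain ⟨hJS, -⟩ := mem_powersetCard.mp hJ
    simpa [erase_insert (fun h => hz (hJS h))] using hJS
  · intro K _
    exact Subtype.ext (Subtype.ext (insert_erase K.2))
  · intro J hJ
    exact erase_insert (fun h => hz ((mem_powersetCard.mp hJ).1 h))

theorem card_subtype_mem (z : α) :
    Fintype.card {K : FourSubset α // z ∈ K.1} = (Fintype.card α - 1).choose 3 := by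
  have h := card_filter_erase_subset (notMem_erase z (univ : Finset α))
  rwa [filter_true_of_mem fun K _ => erase_subset_erase z (subset_univ _), card_univ,
    card_erase_of_mem (mem_univ z), card_univ] at h

theorem card_subtype_notMem (z : α) :
    Fintype.card {I : FourSubset α // z ∉ I.1} = (Fintype.card α - 1).choose 4 := by
  have hcard : Fintype.card α - 1 = #(univ.erase z) := by simp
  rw [hcard, ← card_powersetCard, ← card_univ]
  refine card_bij' (fun I _ => I.1.1) (fun J hJ => ⟨⟨J, (mem_powersetCard.mp hJ).2⟩, ?_⟩)
    ?_ ?_ ?_ ?_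
  · exact fun h => notMem_erase z univ ((mem_powersetCard.mp hJ).1 h)
  · intro I _
    exact mem_powersetCard.mpr ⟨subset_erase.mpr ⟨subset_univ _, I.2⟩, I.1.2⟩
  all_goals simp

end FourSubset

section KeelKapranov

open Matrix

variable {α : Type*} [DecidableEq α]

def keelKapranovMatrix (z : α) : Matrix (FourSubset α) (FourSubset α) ℚ :=
  of fun I I' => min 0 (2 - #(I.1.erase z ∩ I'.1))

theorem keelKapranovMatrix_apply_of_mem {z : α} {I : FourSubset α} (hI : z ∈ I.1)
    (I' : FourSubset α) :
    keelKapranovMatrix z I I' = if I.1.erase z ⊆ I'.1 then -1 else 0 :=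
  min_zero_two_sub_card_inter (by rw [card_erase_of_mem hI, I.2])

theorem keelKapranovMatrix_apply_of_notMem {z : α} {I K : FourSubset α} (hI : z ∉ I.1)
    (hK : z ∈ K.1) :
    keelKapranovMatrix z I K = if K.1.erase z ⊆ I.1 then -1 else 0 := by
  have hinter : I.1.erase z ∩ K.1 = K.1.erase z ∩ I.1 := by
    rw [erase_eq_of_notMem hI, inter_comm, erase_inter, erase_eq_of_notMem (by simp [hI])]
  rw [keelKapranovMatrix, of_apply, hinter]
  exact min_zero_two_sub_card_inter (by rw [card_erase_of_mem hK, K.2])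

theorem keelKapranovMatrix_apply_of_notMem_of_notMem {z : α} {I I' : FourSubset α}
    (hI : z ∉ I.1) : keelKapranovMatrix z I I' = min (0 : ℚ) (2 - #(I.1 ∩ I'.1)) := by
  rw [keelKapranovMatrix, of_apply, erase_eq_of_notMem hI]

abbrev keelKapranovBlocks (z : α) :
    Matrix ({I : FourSubset α // z ∈ I.1} ⊕ {I : FourSubset α // z ∉ I.1})
      ({I : FourSubset α // z ∈ I.1} ⊕ {I : FourSubset α // z ∉ I.1}) ℚ :=
  (keelKapranovMatrix z).submatrix (Equiv.sumCompl fun I : FourSubset α => z ∈ I.1)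
    (Equiv.sumCompl fun I : FourSubset α => z ∈ I.1)

theorem keelKapranovBlocks_toBlocks₁₁ (z : α) :
    (keelKapranovBlocks z).toBlocks₁₁ = -1 := by
  ext I K
  simp only [toBlocks₁₁, of_apply, submatrix_apply, Equiv.sumCompl_apply_inl,
    keelKapranovMatrix_apply_of_mem I.2, erase_subset_iff_of_mem K.2, FourSubset.subset_iff_eq,
    Matrix.neg_apply, Matrix.one_apply, Subtype.ext_iff]
  split_ifs <;> simp

variable [Fintype α]

theorem keelKapranovBlocks_schur (z : α) :
    (keelKapranovBlocks z).toBlocks₂₂ +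
      (keelKapranovBlocks z).toBlocks₂₁ * (keelKapranovBlocks z).toBlocks₁₂ =
      (2 : ℚ) • 1 := by
  ext I I'
  have hprod (K : {K : FourSubset α // z ∈ K.1}) :
      (keelKapranovBlocks z).toBlocks₂₁ I K * (keelKapranovBlocks z).toBlocks₁₂ K I' =
        if K.1.1.erase z ⊆ I.1.1 ∩ I'.1.1 then 1 else 0 := by
    simp only [toBlocks₂₁, toBlocks₁₂, of_apply, submatrix_apply, Equiv.sumCompl_apply_inl,
      Equiv.sumCompl_apply_inr, keelKapranovMatrix_apply_of_notMem I.2 K.2,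
      keelKapranovMatrix_apply_of_mem K.2, subset_inter_iff]
    split_ifs <;> simp_all
  have hD : (keelKapranovBlocks z).toBlocks₂₂ I I' = min (0 : ℚ) (2 - #(I.1.1 ∩ I'.1.1)) :=
    keelKapranovMatrix_apply_of_notMem_of_notMem I.2
  rw [Matrix.add_apply, mul_apply, Fintype.sum_congr _ _ hprod, sum_boole,
    FourSubset.card_filter_erase_subset (fun h => I.2 (mem_inter.mp h).1), hD,
    min_zero_two_sub_add_choose_three (FourSubset.card_inter_le_four _ _)]
  simp [FourSubset.card_inter_eq_four_iff, Matrix.one_apply, Subtype.ext_iff]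

theorem det_keelKapranovMatrix (z : α) :
    (keelKapranovMatrix z).det =
      (-1) ^ (Fintype.card α - 1).choose 3 * 2 ^ (Fintype.card α - 1).choose 4 := by
  rw [← det_submatrix_equiv_self (Equiv.sumCompl fun I : FourSubset α => z ∈ I.1)]
  change (keelKapranovBlocks z).det = _
  rw [← fromBlocks_toBlocks (keelKapranovBlocks z), keelKapranovBlocks_toBlocks₁₁]
  let _ := invertibleOne
    (α := Matrix {I : FourSubset α // z ∈ I.1} {I : FourSubset α // z ∈ I.1} ℚ)
  let _ := invertibleNeg
    (1 : Matrix {I : FourSubset α // z ∈ I.1} {I : FourSubset α // z ∈ I.1} ℚ)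
  rw [det_fromBlocks₁₁, invOf_neg, invOf_one, Matrix.mul_neg, Matrix.mul_one, Matrix.neg_mul,
    sub_neg_eq_add, keelKapranovBlocks_schur, det_neg, det_smul, det_one, det_one, mul_one, mul_one,
    FourSubset.card_subtype_mem, FourSubset.card_subtype_notMem]

end KeelKapranov

/-- The determinant of the matrix of intersection numbers of the Keel classes `[S_I]`
with the 1-cycles dual to the Kapranov basis elements `Δ_{I ∖ {n}}`,
with entry `min {0, 2 − |(I ∖ {n}) ∩ I′|}`, equals `(−1)^(C(n−1,3)) · 2^(C(n−1,4))`. -/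
theorem keel_kapranov_det (n : ℕ) (hn : 6 ≤ n) :
    Matrix.det (Matrix.of fun I I' : {I : Finset (Fin n) // I.card = 4} =>
        min (0 : ℚ) (2 - (((I.1.erase (⟨n - 1, by omega⟩ : Fin n)) ∩ I'.1).card : ℚ))) =
      (-1) ^ (Nat.choose (n - 1) 3) * 2 ^ (Nat.choose (n - 1) 4) := by
  have h := det_keelKapranovMatrix (⟨n - 1, by omega⟩ : Fin n)
  rw [Fintype.card_fin] at h
  exact h
end

section
/- Let α, λ, μ be rational numbers and set x = −4α − 9λ + 5μ. Let P be the 7×7 matrix over ℚ whose entries are: P(i,i) = x + 5α for 1 ≤ i ≤ 6; P(i,j) = x for 1 ≤ i,j ≤ 6 with i ≠ j; P(i,7) = −5(x + α) for 1 ≤ i ≤ 6; P(7,j) = x + 5α for 1 ≤ j ≤ 6; and P(7,7) = −5(x + 4α). Then det P = −(5α)^6 · (18α + 63λ − 35μ). -/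
/-!
Subtracting `c` from the diagonal of the bordered matrix leaves a matrix `U * V` of rank at most
two, with `U` of size `(n + 2) × 2`. Sylvester's identity `det (t + U V) = t ^ n * det (t + V U)`,
read off from `charpoly_mul_comm_of_le` so that `t` need not be invertible, reduces the
determinant to a `2 × 2` one. For the theorem, `c = 5α` and `n = 5`.
-/

open Matrix Polynomial

theorem Matrix.det_scalar_add_mul_comm_of_card_le {R m n : Type*} [CommRing R]
    [Fintype m] [DecidableEq m] [Fintype n] [DecidableEq n]
    (A : Matrix m n R) (B : Matrix n m R) (hle : Fintype.card n ≤ Fintype.card m) (t : R) :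
    det (scalar m t + A * B) =
      t ^ (Fintype.card m - Fintype.card n) * det (scalar n t + B * A) := by
  have h := congrArg (eval (-t)) (charpoly_mul_comm_of_le A B hle)
  rw [eval_mul, eval_pow, eval_X, eval_charpoly, eval_charpoly, map_neg, map_neg,
    ← neg_add', det_neg, ← neg_add', det_neg] at h
  obtain ⟨k, hk⟩ := Nat.exists_eq_add_of_le hle
  rw [hk, Nat.add_sub_cancel_left] at h ⊢
  refine ((isUnit_neg_one (α := R)).pow (Fintype.card n + k)).mul_left_cancel ?_
  rw [h]
  ring

theorem Matrix.det_bordered_scalar_add_const {R : Type*} [CommRing R] (n : ℕ) (c z w y v : R) :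
    det (of fun i j : Fin (n + 2) =>
        if i.val < n + 1 then (if j.val < n + 1 then (if i = j then z + c else z) else w)
        else (if j.val < n + 1 then y else v)) =
      c ^ n * ((c + (n + 1) * z) * v - (n + 1) * y * w) := by
  let U : Matrix (Fin (n + 2)) (Fin 2) R := of fun i => if i.val < n + 1 then ![1, 0] else ![0, 1]
  let V : Matrix (Fin 2) (Fin (n + 2)) R :=
    of ![fun j => if j.val < n + 1 then z else w, fun j => if j.val < n + 1 then y else v - c]
  have hUV : (of fun i j : Fin (n + 2) =>
        if i.val < n + 1 then (if j.val < n + 1 then (if i = j then z + c else z) else w)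
        else (if j.val < n + 1 then y else v)) = scalar _ c + U * V := by
    ext i j
    simp only [U, V, of_apply, Matrix.add_apply, scalar_apply, diagonal_apply, mul_apply,
      Fin.sum_univ_two, Nat.lt_add_one_iff]
    rcases eq_or_ne i j with rfl | hij
    · by_cases hi : i.val ≤ n <;> simp [hi, add_comm]
    · by_cases hi : i.val ≤ n <;> by_cases hj : j.val ≤ n <;> simp [hi, hj, hij]
      exact absurd (Fin.ext (by omega)) hij
  have hVU : scalar _ c + V * U = !![c + (n + 1) * z, w; (n + 1) * y, v] := by
    ext k l
    simp only [U, V, Matrix.add_apply, scalar_apply, diagonal_apply, mul_apply,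
      Fin.sum_univ_castSucc]
    fin_cases k <;> fin_cases l <;> simp <;> ring
  rw [hUV, det_scalar_add_mul_comm_of_card_le U V (by simp), hVU, det_fin_two_of,
    Fintype.card_fin, Fintype.card_fin, Nat.add_sub_cancel]
  ring

/-- The determinant of the 7×7 base-change matrix recording the coordinates of the
classes `[P_i] = α[D_i] + λ[B_2] + μ[B_3]` on `[Δ_{17}],…,[Δ_{67}]` and `H` equals
`−(5α)^6 (18α + 63λ − 35μ)`.  Rows/columns `0,…,5` correspond to `1,…,6` and index `6`
corresponds to `7`. -/
theorem basis_change_det_M07 (a l m x : ℚ) (hx : x = -4*a - 9*l + 5*m) :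
    Matrix.det (Matrix.of fun i j : Fin 7 =>
        if i.val < 6 then
          (if j.val < 6 then (if i = j then x + 5*a else x) else -5*(x + a))
        else
          (if j.val < 6 then x + 5*a else -5*(x + 4*a))) =
      -(5*a)^6 * (18*a + 63*l - 35*m) := by
  rw [Matrix.det_bordered_scalar_add_const 5]
  subst hx
  ring
end

section
/- Let α, λ, μ be rational numbers, let s assign a rational number s_I to each 4-element subset I of {1,…,7}, and let p_1,…,p_7 be rationals. If (s,p) is F-nef with parameters (α,λ,μ), then for every 2-element subset {i,j} of {1,…,7}: 6·c_{ij} + (4α + 9λ − 5μ)(p_i + p_j) + (2α + 9λ − 5μ)·∑_{k∉{i,j}} p_k ≥ 0, where c_{ij} = (1/3)·∑_{I ⊇ {i,j}} s_I + (α+λ)(p_i + p_j) + λ·∑_{k∉{i,j}} p_k (the sum over I ranging over 4-element subsets of {1,…,7}). -/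
open Finset

/-- `(s, p)` is F-nef with parameters `(a, l, m)` (`α`, `λ`, `μ`): the value of the
divisor `D = ∑ s_I S_I + ∑ p_i P_i` on every F-curve of `M̄_{0,7}` is nonnegative,
for the three combinatorial types `(1:1:1:4)`, `(1:1:2:3)`, `(1:2:2:2)` of partitions
`(A,B,C,D)` of the marked points. -/
def FNef (a l m : ℚ) (s : Finset (Fin 7) → ℚ) (p : Fin 7 → ℚ) : Prop :=
  ∀ A B C D : Finset (Fin 7),
    Disjoint A B → Disjoint A C → Disjoint A D →
    Disjoint B C → Disjoint B D → Disjoint C D →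
    A ∪ B ∪ C ∪ D = univ →
    A.Nonempty → B.Nonempty → C.Nonempty → D.Nonempty →
    ((A.card = 1 ∧ B.card = 1 ∧ C.card = 1 ∧ D.card = 4 →
        0 ≤ (∑ I ∈ univ.filter (fun I : Finset (Fin 7) => I.card = 4 ∧
                (I ∩ A).card = 1 ∧ (I ∩ B).card = 1 ∧ (I ∩ C).card = 1 ∧ (I ∩ D).card = 1),
              s I)
            + (2*a + 3*l - m) * (∑ i ∈ A ∪ B ∪ C, p i)
            + (3*l - m) * (∑ j ∈ D, p j)) ∧
     (A.card = 1 ∧ B.card = 1 ∧ C.card = 2 ∧ D.card = 3 →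
        0 ≤ (∑ I ∈ univ.filter (fun I : Finset (Fin 7) => I.card = 4 ∧
                (I ∩ A).card = 1 ∧ (I ∩ B).card = 1 ∧ (I ∩ C).card = 1 ∧ (I ∩ D).card = 1),
              s I)
            + (a + m) * (∑ i ∈ A ∪ B, p i)
            + (-a + m) * (∑ j ∈ C, p j)
            + m * (∑ k ∈ D, p k)) ∧
     (A.card = 1 ∧ B.card = 2 ∧ C.card = 2 ∧ D.card = 2 →
        0 ≤ (∑ I ∈ univ.filter (fun I : Finset (Fin 7) => I.card = 4 ∧
                (I ∩ A).card = 1 ∧ (I ∩ B).card = 1 ∧ (I ∩ C).card = 1 ∧ (I ∩ D).card = 1),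
              s I)
            + 3*(m - l) * (∑ i ∈ A, p i)
            + (-a + 3*(m - l)) * (∑ j ∈ B ∪ C ∪ D, p j)))

/-- The coefficient `c_J` of the boundary divisor `Δ_J` in the obvious representative of
`D = ∑ s_I S_I + ∑ p_i P_i`, for `J` of cardinality 2 or 3. -/
def cJ (a l m : ℚ) (s : Finset (Fin 7) → ℚ) (p : Fin 7 → ℚ) (J : Finset (Fin 7)) : ℚ :=
  if J.card = 2 then
    (1/3) * (∑ I ∈ univ.filter (fun I : Finset (Fin 7) => I.card = 4 ∧ J ⊆ I), s I)
      + (a + l) * (∑ i ∈ J, p i) + l * (∑ k ∈ Jᶜ, p k)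
  else
    (1/3) * (∑ I ∈ univ.filter (fun I : Finset (Fin 7) => I.card = 4 ∧ (I ∩ J).card = 2), s I)
      + m * (∑ k, p k)

/-!
For `k ∉ {i, j}` the F-curve of type `(1:1:1:4)` with parts `{k}, {i}, {j}, {i, j, k}ᶜ` gives
`∑_{I ⊇ {i,j,k}} s_I + (2α+3λ−μ)(p_i+p_j+p_k) + (3λ−μ) ∑_{d ∉ {i,j,k}} p_d ≥ 0`.
Summing over the five such `k`, every 4-set `I ⊇ {i, j}` is counted twice (once for each
`k ∈ I \ {i, j}`), and the sum is exactly the claimed expression, since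
`6 c_{ij} = 2 ∑_{I ⊇ {i,j}} s_I + 6(α+λ)(p_i+p_j) + 6λ ∑_{k ∉ {i,j}} p_k`.
-/

namespace Finset

variable {α : Type*} [DecidableEq α]

theorem card_inter_singleton_eq_one_iff {s : Finset α} {x : α} : #(s ∩ {x}) = 1 ↔ x ∈ s := by
  by_cases h : x ∈ s <;> simp [h]

variable [Fintype α]

theorem card_inter_compl_of_subset {s t : Finset α} (h : t ⊆ s) : #(s ∩ tᶜ) = #s - #t := by
  rw [← sdiff_eq_inter_compl, card_sdiff_of_subset h]

variable {M : Type*}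

/-- Double counting: each `r`-set `I ⊇ J` arises from the `r - #J` points `k ∈ I \ J`. -/
theorem sum_compl_sum_filter_insert_subset [AddCommMonoid M] (f : Finset α → M)
    (J : Finset α) (r : ℕ) :
    ∑ k ∈ Jᶜ, ∑ I with #I = r ∧ insert k J ⊆ I, f I
      = (r - #J) • ∑ I with #I = r ∧ J ⊆ I, f I := by
  simp only [sum_filter]
  rw [sum_comm, smul_sum]
  refine sum_congr rfl fun I _ => ?_
  by_cases hI : #I = r ∧ J ⊆ I
  · obtain ⟨hr, hJ⟩ := hI
    simp only [insert_subset_iff, hJ, and_true, hr, true_and, if_true]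
    rw [sum_ite_mem, sum_const, inter_comm, card_inter_compl_of_subset hJ, hr]
  · rw [if_neg hI, smul_zero]
    refine sum_eq_zero fun k _ => if_neg ?_
    rintro ⟨hr, hkJ⟩
    exact hI ⟨hr, (subset_insert k J).trans hkJ⟩

theorem sum_compl_sum_insert [AddCommMonoid M] (f : α → M) (J : Finset α) :
    ∑ k ∈ Jᶜ, ∑ d ∈ insert k J, f d = #Jᶜ • ∑ d ∈ J, f d + ∑ d ∈ Jᶜ, f d := by
  rw [sum_congr rfl fun k hk => sum_insert (mem_compl.1 hk), sum_add_distrib, sum_const,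
    add_comm]

theorem sum_compl_sum_compl_insert [AddCommGroup M] (f : α → M) (J : Finset α) :
    ∑ k ∈ Jᶜ, ∑ d ∈ (insert k J)ᶜ, f d = #Jᶜ • ∑ d ∈ Jᶜ, f d - ∑ d ∈ Jᶜ, f d := by
  simp_rw [compl_insert]
  rw [sum_congr rfl fun k hk => sum_erase_eq_sub hk, sum_sub_distrib, sum_const]

end Finset

theorem FNef.nonneg_of_three_singletons {a l m : ℚ} {s : Finset (Fin 7) → ℚ} {p : Fin 7 → ℚ}
    (hF : FNef a l m s p) {i j k : Fin 7} (hij : i ≠ j) (hk : k ∉ ({i, j} : Finset (Fin 7))) :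
    0 ≤ ∑ I with #I = 4 ∧ insert k {i, j} ⊆ I, s I
      + (2*a + 3*l - m) * ∑ d ∈ insert k {i, j}, p d
      + (3*l - m) * ∑ d ∈ (insert k {i, j})ᶜ, p d := by
  have hki : k ≠ i := fun h => hk (by simp [h])
  have hkj : k ≠ j := fun h => hk (by simp [h])
  set T : Finset (Fin 7) := insert k {i, j}
  have hT : #T = 3 := by rw [card_insert_of_notMem hk, card_pair hij]
  have hTc : #Tᶜ = 4 := by rw [card_compl, hT, Fintype.card_fin]
  have hunion : {k} ∪ {i} ∪ {j} = T := by
    rw [union_assoc, singleton_union, ← insert_eq]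
  have htransversal : ∀ I : Finset (Fin 7), (#I = 4 ∧ #(I ∩ {k}) = 1 ∧ #(I ∩ {i}) = 1 ∧
      #(I ∩ {j}) = 1 ∧ #(I ∩ Tᶜ) = 1) ↔ (#I = 4 ∧ T ⊆ I) := by
    intro I
    simp only [card_inter_singleton_eq_one_iff, T, insert_subset_iff, singleton_subset_iff]
    constructor
    · rintro ⟨h4, hkI, hiI, hjI, -⟩
      exact ⟨h4, hkI, hiI, hjI⟩
    · rintro ⟨h4, hkI, hiI, hjI⟩
      refine ⟨h4, hkI, hiI, hjI, ?_⟩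
      rw [card_inter_compl_of_subset (by simp [insert_subset_iff, *]), h4, hT]
  have hdisj : ∀ x : Fin 7, x ∈ T → Disjoint {x} Tᶜ := fun x hx =>
    disjoint_compl_right_iff.2 (singleton_subset_iff.2 hx)
  have H := (hF {k} {i} {j} Tᶜ (disjoint_singleton.2 hki) (disjoint_singleton.2 hkj)
    (hdisj k (by simp [T])) (disjoint_singleton.2 hij) (hdisj i (by simp [T]))
    (hdisj j (by simp [T])) (by rw [hunion, union_compl]) (singleton_nonempty k)
    (singleton_nonempty i) (singleton_nonempty j) (card_pos.1 (by omega))).1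
    ⟨card_singleton k, card_singleton i, card_singleton j, hTc⟩
  rwa [filter_congr fun I _ => htransversal I, hunion] at H

/-- Summing the F-inequalities over the five F-curves of type `(1:1:1:4)` with singleton
spine tails `{i}` and `{j}` gives
`6 c_{ij} + (4α+9λ−5μ)(p_i+p_j) + (2α+9λ−5μ) ∑_{k∉{i,j}} p_k ≥ 0`. -/
theorem stmt4 (a l m : ℚ) (s : Finset (Fin 7) → ℚ) (p : Fin 7 → ℚ)
    (hF : FNef a l m s p) (i j : Fin 7) (hij : i ≠ j) :
    0 ≤ 6 * cJ a l m s p {i, j}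
        + (4*a + 9*l - 5*m) * (p i + p j)
        + (2*a + 9*l - 5*m) * (∑ k ∈ ({i, j}ᶜ : Finset (Fin 7)), p k) := by
  have hJ : #({i, j} : Finset (Fin 7)) = 2 := card_pair hij
  have hJc : #({i, j}ᶜ : Finset (Fin 7)) = 5 := by rw [card_compl, hJ, Fintype.card_fin]
  have hsum := sum_nonneg fun k (hk : k ∈ ({i, j}ᶜ : Finset (Fin 7))) =>
    hF.nonneg_of_three_singletons hij (mem_compl.1 hk)
  rw [sum_add_distrib, sum_add_distrib, ← mul_sum, ← mul_sum, sum_compl_sum_filter_insert_subset,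
    sum_compl_sum_insert, sum_compl_sum_compl_insert, hJ, hJc, sum_pair hij] at hsum
  rw [cJ, if_pos hJ, sum_pair hij]
  simp only [nsmul_eq_mul, Nat.reduceSub, Nat.cast_ofNat] at hsum
  linear_combination hsum
end

section
/- Let α, λ, μ be rational numbers, let s assign a rational number s_I to each 4-element subset I of {1,…,7}, and let p_1,…,p_7 be rationals. If (s,p) is F-nef with parameters (α,λ,μ), then for every 3-element subset J of {1,…,7}: 12·c_J + (−6α − 27λ + 15μ)·∑_{i∈J} p_i + (−9α − 27λ + 15μ)·∑_{j∉J} p_j ≥ 0, where c_J = (1/3)·∑_{|I∩J|=2} s_I + μ·(p_1 + ⋯ + p_7) (the sum over I ranging over 4-element subsets of {1,…,7}). -/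
open Finset

open Finset

lemma sum_p (σ : Equiv.Perm (Fin 7)) (p : Fin 7 → ℚ) (A : Finset (Fin 7)) :
    (∑ i ∈ A, p (σ i)) = ∑ i ∈ A.image σ, p i :=
  (Finset.sum_image (by simp [σ.injective.eq_iff])).symm

lemma image_compl' (σ : Equiv.Perm (Fin 7)) (A : Finset (Fin 7)) :
    Aᶜ.image σ = (A.image σ)ᶜ := by
  ext x
  simp only [Finset.mem_image, Finset.mem_compl]
  constructor
  · rintro ⟨y, hy, rfl⟩ ⟨z, hz, hzy⟩
    exact hy (σ.injective hzy ▸ hz)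
  · intro hx
    exact ⟨σ.symm x, fun hc => hx ⟨σ.symm x, hc, σ.apply_symm_apply x⟩, σ.apply_symm_apply x⟩

lemma sum_trans (σ : Equiv.Perm (Fin 7)) (s : Finset (Fin 7) → ℚ) (A B C D : Finset (Fin 7)) :
    (∑ I ∈ univ.filter (fun I : Finset (Fin 7) => I.card = 4 ∧
        (I ∩ A).card = 1 ∧ (I ∩ B).card = 1 ∧ (I ∩ C).card = 1 ∧ (I ∩ D).card = 1),
      s (I.image σ))
    = ∑ I ∈ univ.filter (fun I : Finset (Fin 7) => I.card = 4 ∧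
        (I ∩ A.image σ).card = 1 ∧ (I ∩ B.image σ).card = 1 ∧ (I ∩ C.image σ).card = 1 ∧
        (I ∩ D.image σ).card = 1), s I := by
  apply Finset.sum_equiv σ.finsetCongr
  · intro I
    simp [Equiv.finsetCongr_apply, Finset.map_eq_image,
      ← Finset.image_inter _ _ σ.injective, Finset.card_image_of_injective _ σ.injective]
  · intro I _
    simp [Equiv.finsetCongr_apply, Finset.map_eq_image]

lemma sum_two (σ : Equiv.Perm (Fin 7)) (s : Finset (Fin 7) → ℚ) (J : Finset (Fin 7)) :
    (∑ I ∈ univ.filter (fun I : Finset (Fin 7) => I.card = 4 ∧ (I ∩ J).card = 2),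
      s (I.image σ))
    = ∑ I ∈ univ.filter (fun I : Finset (Fin 7) => I.card = 4 ∧ (I ∩ J.image σ).card = 2),
      s I := by
  apply Finset.sum_equiv σ.finsetCongr
  · intro I
    simp [Equiv.finsetCongr_apply, Finset.map_eq_image,
      ← Finset.image_inter _ _ σ.injective, Finset.card_image_of_injective _ σ.injective]
  · intro I _
    simp [Equiv.finsetCongr_apply, Finset.map_eq_image]

lemma FNef.perm {a l m : ℚ} {s : Finset (Fin 7) → ℚ} {p : Fin 7 → ℚ}
    (h : FNef a l m s p) (σ : Equiv.Perm (Fin 7)) :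
    FNef a l m (fun I => s (I.image σ)) (fun i => p (σ i)) := by
  intro A B C D hAB hAC hAD hBC hBD hCD hU hA hB hC hD
  have key := h (A.image σ) (B.image σ) (C.image σ) (D.image σ)
    ((Finset.disjoint_image σ.injective).2 hAB)
    ((Finset.disjoint_image σ.injective).2 hAC)
    ((Finset.disjoint_image σ.injective).2 hAD)
    ((Finset.disjoint_image σ.injective).2 hBC)
    ((Finset.disjoint_image σ.injective).2 hBD)
    ((Finset.disjoint_image σ.injective).2 hCD)
    (by rw [← Finset.image_union, ← Finset.image_union, ← Finset.image_union, hU,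
        Finset.image_univ_of_surjective σ.surjective])
    (hA.image _) (hB.image _) (hC.image _) (hD.image _)
  refine ⟨fun hc => ?_, fun hc => ?_, fun hc => ?_⟩
  · have H := key.1 (by
      simp only [Finset.card_image_of_injective _ σ.injective]
      exact hc)
    simp only []
    rw [sum_trans σ s A B C D, sum_p σ p (A ∪ B ∪ C), sum_p σ p D,
      Finset.image_union, Finset.image_union]
    exact H
  · have H := key.2.1 (by
      simp only [Finset.card_image_of_injective _ σ.injective]
      exact hc)
    simp only []
    rw [sum_trans σ s A B C D, sum_p σ p (A ∪ B), sum_p σ p C, sum_p σ p D,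
      Finset.image_union]
    exact H
  · have H := key.2.2 (by
      simp only [Finset.card_image_of_injective _ σ.injective]
      exact hc)
    simp only []
    rw [sum_trans σ s A B C D, sum_p σ p A, sum_p σ p (B ∪ C ∪ D),
      Finset.image_union, Finset.image_union]
    exact H

lemma cJ_perm (a l m : ℚ) (s : Finset (Fin 7) → ℚ) (p : Fin 7 → ℚ)
    (σ : Equiv.Perm (Fin 7)) (J : Finset (Fin 7)) (hJ : J.card = 3) :
    cJ a l m (fun I => s (I.image σ)) (fun i => p (σ i)) J = cJ a l m s p (J.image σ) := by
  rw [cJ, cJ, if_neg (by rw [hJ]; norm_num),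
    if_neg (by rw [Finset.card_image_of_injective _ σ.injective, hJ]; norm_num)]
  rw [sum_two σ s J, Equiv.sum_comp σ p]

lemma stmt8_base (a l m : ℚ) (s : Finset (Fin 7) → ℚ) (p : Fin 7 → ℚ)
    (hF : FNef a l m s p) :
    0 ≤ 12 * cJ a l m s p {0,1,2}
        + (-6*a - 27*l + 15*m) * (∑ i ∈ ({0,1,2} : Finset (Fin 7)), p i)
        + (-9*a - 27*l + 15*m) * (∑ j ∈ ({0,1,2} : Finset (Fin 7))ᶜ, p j) := by
  have h1 := (hF ({0} : Finset (Fin 7)) {1,2} {3,4} {5,6} (by decide) (by decide) (by decide) (by decide) (by decide) (by decide) (by decide) (by decide) (by decide) (by decide) (by decide)).2.2 (by decide)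
  rw [show (Finset.univ.filter (fun I : Finset (Fin 7) => I.card = 4 ∧ (I ∩ ({0} : Finset (Fin 7))).card = 1 ∧ (I ∩ ({1,2} : Finset (Fin 7))).card = 1 ∧ (I ∩ ({3,4} : Finset (Fin 7))).card = 1 ∧ (I ∩ ({5,6} : Finset (Fin 7))).card = 1)) = ({{0,1,3,5},{0,1,3,6},{0,1,4,5},{0,1,4,6},{0,2,3,5},{0,2,3,6},{0,2,4,5},{0,2,4,6}} : Finset (Finset (Fin 7))) from by decide, show ({1,2} : Finset (Fin 7)) ∪ {3,4} ∪ {5,6} = ({1,2,3,4,5,6} : Finset (Fin 7)) from by decide] at h1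
  have h2 := (hF ({0} : Finset (Fin 7)) {1,2} {3,5} {4,6} (by decide) (by decide) (by decide) (by decide) (by decide) (by decide) (by decide) (by decide) (by decide) (by decide) (by decide)).2.2 (by decide)
  rw [show (Finset.univ.filter (fun I : Finset (Fin 7) => I.card = 4 ∧ (I ∩ ({0} : Finset (Fin 7))).card = 1 ∧ (I ∩ ({1,2} : Finset (Fin 7))).card = 1 ∧ (I ∩ ({3,5} : Finset (Fin 7))).card = 1 ∧ (I ∩ ({4,6} : Finset (Fin 7))).card = 1)) = ({{0,1,3,4},{0,1,3,6},{0,1,4,5},{0,1,5,6},{0,2,3,4},{0,2,3,6},{0,2,4,5},{0,2,5,6}} : Finset (Finset (Fin 7))) from by decide, show ({1,2} : Finset (Fin 7)) ∪ {3,5} ∪ {4,6} = ({1,2,3,4,5,6} : Finset (Fin 7)) from by decide] at h2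
  have h3 := (hF ({0} : Finset (Fin 7)) {1,2} {3,6} {4,5} (by decide) (by decide) (by decide) (by decide) (by decide) (by decide) (by decide) (by decide) (by decide) (by decide) (by decide)).2.2 (by decide)
  rw [show (Finset.univ.filter (fun I : Finset (Fin 7) => I.card = 4 ∧ (I ∩ ({0} : Finset (Fin 7))).card = 1 ∧ (I ∩ ({1,2} : Finset (Fin 7))).card = 1 ∧ (I ∩ ({3,6} : Finset (Fin 7))).card = 1 ∧ (I ∩ ({4,5} : Finset (Fin 7))).card = 1)) = ({{0,1,3,4},{0,1,3,5},{0,1,4,6},{0,1,5,6},{0,2,3,4},{0,2,3,5},{0,2,4,6},{0,2,5,6}} : Finset (Finset (Fin 7))) from by decide, show ({1,2} : Finset (Fin 7)) ∪ {3,6} ∪ {4,5} = ({1,2,3,4,5,6} : Finset (Fin 7)) from by decide] at h3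
  have h4 := (hF ({1} : Finset (Fin 7)) {0,2} {3,4} {5,6} (by decide) (by decide) (by decide) (by decide) (by decide) (by decide) (by decide) (by decide) (by decide) (by decide) (by decide)).2.2 (by decide)
  rw [show (Finset.univ.filter (fun I : Finset (Fin 7) => I.card = 4 ∧ (I ∩ ({1} : Finset (Fin 7))).card = 1 ∧ (I ∩ ({0,2} : Finset (Fin 7))).card = 1 ∧ (I ∩ ({3,4} : Finset (Fin 7))).card = 1 ∧ (I ∩ ({5,6} : Finset (Fin 7))).card = 1)) = ({{0,1,3,5},{0,1,3,6},{0,1,4,5},{0,1,4,6},{1,2,3,5},{1,2,3,6},{1,2,4,5},{1,2,4,6}} : Finset (Finset (Fin 7))) from by decide, show ({0,2} : Finset (Fin 7)) ∪ {3,4} ∪ {5,6} = ({0,2,3,4,5,6} : Finset (Fin 7)) from by decide] at h4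
  have h5 := (hF ({1} : Finset (Fin 7)) {0,2} {3,5} {4,6} (by decide) (by decide) (by decide) (by decide) (by decide) (by decide) (by decide) (by decide) (by decide) (by decide) (by decide)).2.2 (by decide)
  rw [show (Finset.univ.filter (fun I : Finset (Fin 7) => I.card = 4 ∧ (I ∩ ({1} : Finset (Fin 7))).card = 1 ∧ (I ∩ ({0,2} : Finset (Fin 7))).card = 1 ∧ (I ∩ ({3,5} : Finset (Fin 7))).card = 1 ∧ (I ∩ ({4,6} : Finset (Fin 7))).card = 1)) = ({{0,1,3,4},{0,1,3,6},{0,1,4,5},{0,1,5,6},{1,2,3,4},{1,2,3,6},{1,2,4,5},{1,2,5,6}} : Finset (Finset (Fin 7))) from by decide, show ({0,2} : Finset (Fin 7)) ∪ {3,5} ∪ {4,6} = ({0,2,3,4,5,6} : Finset (Fin 7)) from by decide] at h5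
  have h6 := (hF ({1} : Finset (Fin 7)) {0,2} {3,6} {4,5} (by decide) (by decide) (by decide) (by decide) (by decide) (by decide) (by decide) (by decide) (by decide) (by decide) (by decide)).2.2 (by decide)
  rw [show (Finset.univ.filter (fun I : Finset (Fin 7) => I.card = 4 ∧ (I ∩ ({1} : Finset (Fin 7))).card = 1 ∧ (I ∩ ({0,2} : Finset (Fin 7))).card = 1 ∧ (I ∩ ({3,6} : Finset (Fin 7))).card = 1 ∧ (I ∩ ({4,5} : Finset (Fin 7))).card = 1)) = ({{0,1,3,4},{0,1,3,5},{0,1,4,6},{0,1,5,6},{1,2,3,4},{1,2,3,5},{1,2,4,6},{1,2,5,6}} : Finset (Finset (Fin 7))) from by decide, show ({0,2} : Finset (Fin 7)) ∪ {3,6} ∪ {4,5} = ({0,2,3,4,5,6} : Finset (Fin 7)) from by decide] at h6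
  have h7 := (hF ({2} : Finset (Fin 7)) {0,1} {3,4} {5,6} (by decide) (by decide) (by decide) (by decide) (by decide) (by decide) (by decide) (by decide) (by decide) (by decide) (by decide)).2.2 (by decide)
  rw [show (Finset.univ.filter (fun I : Finset (Fin 7) => I.card = 4 ∧ (I ∩ ({2} : Finset (Fin 7))).card = 1 ∧ (I ∩ ({0,1} : Finset (Fin 7))).card = 1 ∧ (I ∩ ({3,4} : Finset (Fin 7))).card = 1 ∧ (I ∩ ({5,6} : Finset (Fin 7))).card = 1)) = ({{0,2,3,5},{0,2,3,6},{0,2,4,5},{0,2,4,6},{1,2,3,5},{1,2,3,6},{1,2,4,5},{1,2,4,6}} : Finset (Finset (Fin 7))) from by decide, show ({0,1} : Finset (Fin 7)) ∪ {3,4} ∪ {5,6} = ({0,1,3,4,5,6} : Finset (Fin 7)) from by decide] at h7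
  have h8 := (hF ({2} : Finset (Fin 7)) {0,1} {3,5} {4,6} (by decide) (by decide) (by decide) (by decide) (by decide) (by decide) (by decide) (by decide) (by decide) (by decide) (by decide)).2.2 (by decide)
  rw [show (Finset.univ.filter (fun I : Finset (Fin 7) => I.card = 4 ∧ (I ∩ ({2} : Finset (Fin 7))).card = 1 ∧ (I ∩ ({0,1} : Finset (Fin 7))).card = 1 ∧ (I ∩ ({3,5} : Finset (Fin 7))).card = 1 ∧ (I ∩ ({4,6} : Finset (Fin 7))).card = 1)) = ({{0,2,3,4},{0,2,3,6},{0,2,4,5},{0,2,5,6},{1,2,3,4},{1,2,3,6},{1,2,4,5},{1,2,5,6}} : Finset (Finset (Fin 7))) from by decide, show ({0,1} : Finset (Fin 7)) ∪ {3,5} ∪ {4,6} = ({0,1,3,4,5,6} : Finset (Fin 7)) from by decide] at h8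
  have h9 := (hF ({2} : Finset (Fin 7)) {0,1} {3,6} {4,5} (by decide) (by decide) (by decide) (by decide) (by decide) (by decide) (by decide) (by decide) (by decide) (by decide) (by decide)).2.2 (by decide)
  rw [show (Finset.univ.filter (fun I : Finset (Fin 7) => I.card = 4 ∧ (I ∩ ({2} : Finset (Fin 7))).card = 1 ∧ (I ∩ ({0,1} : Finset (Fin 7))).card = 1 ∧ (I ∩ ({3,6} : Finset (Fin 7))).card = 1 ∧ (I ∩ ({4,5} : Finset (Fin 7))).card = 1)) = ({{0,2,3,4},{0,2,3,5},{0,2,4,6},{0,2,5,6},{1,2,3,4},{1,2,3,5},{1,2,4,6},{1,2,5,6}} : Finset (Finset (Fin 7))) from by decide, show ({0,1} : Finset (Fin 7)) ∪ {3,6} ∪ {4,5} = ({0,1,3,4,5,6} : Finset (Fin 7)) from by decide] at h9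
  rw [cJ, if_neg (by decide), show (Finset.univ.filter (fun I : Finset (Fin 7) => I.card = 4 ∧ (I ∩ ({0,1,2} : Finset (Fin 7))).card = 2)) = ({{0,1,3,4},{0,1,3,5},{0,1,3,6},{0,1,4,5},{0,1,4,6},{0,1,5,6},{0,2,3,4},{0,2,3,5},{0,2,3,6},{0,2,4,5},{0,2,4,6},{0,2,5,6},{1,2,3,4},{1,2,3,5},{1,2,3,6},{1,2,4,5},{1,2,4,6},{1,2,5,6}} : Finset (Finset (Fin 7))) from by decide, show ({0,1,2} : Finset (Fin 7))ᶜ = ({3,4,5,6} : Finset (Fin 7)) from by decide]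
  simp (config := { decide := true }) only [Finset.sum_insert, Finset.sum_singleton, Finset.mem_insert, Finset.mem_singleton, Fin.sum_univ_seven] at h1 h2 h3 h4 h5 h6 h7 h8 h9 ⊢
  linarith [h1, h2, h3, h4, h5, h6, h7, h8, h9]

/-- Summing the F-inequalities over the nine F-curves of type `(1:2:2:2)` whose singleton
tail and one 2-element tail carry the labels of `J` gives
`12 c_J + (−6α−27λ+15μ) ∑_{i∈J} p_i + (−9α−27λ+15μ) ∑_{j∉J} p_j ≥ 0`. -/
theorem stmt8 (a l m : ℚ) (s : Finset (Fin 7) → ℚ) (p : Fin 7 → ℚ)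
    (hF : FNef a l m s p) (J : Finset (Fin 7)) (hJ : J.card = 3) :
    0 ≤ 12 * cJ a l m s p J
        + (-6*a - 27*l + 15*m) * (∑ i ∈ J, p i)
        + (-9*a - 27*l + 15*m) * (∑ j ∈ Jᶜ, p j) := by
  have hcard : (({0,1,2} : Finset (Fin 7)) : Finset (Fin 7)).card = J.card := by
    rw [hJ]; decide
  let e : {x // x ∈ ({0,1,2} : Finset (Fin 7))} ≃ {x // x ∈ J} := Finset.equivOfCardEq hcard
  let σ : Equiv.Perm (Fin 7) := e.extendSubtype
  have himg : ({0,1,2} : Finset (Fin 7)).image σ = J := by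
    apply Finset.eq_of_subset_of_card_le
    · intro x hx
      rw [Finset.mem_image] at hx
      obtain ⟨y, hy, rfl⟩ := hx
      exact e.extendSubtype_mem y hy
    · rw [hJ, Finset.card_image_of_injective _ σ.injective]
      decide
  have h := stmt8_base a l m (fun I => s (I.image σ)) (fun i => p (σ i)) (hF.perm σ)
  rw [cJ_perm a l m s p σ {0,1,2} (by decide), himg,
    sum_p σ p {0,1,2}, sum_p σ p ({0,1,2}ᶜ), image_compl' σ, himg] at h
  exact h
end
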